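/- arXiv:2410.08602 — 2 statements merged into one kernel-verified Lean document; each statement's English description precedes it below -/
import Mathlib

section
/- Let C be the solid cone with apex a, unit axis direction u, half-angle θ ∈ (0, π/2), and let O be a closed ball with center q and radius r. Let p₁ = a + ⟪q - a, u⟫ • u be the projection of q onto the axis (assume ⟪q - a, u⟫ > 0), let d = dist(q, p₁) be the distance from q to the axis, and let ρ = ⟪q - a, u⟫ · tan θ be the radius of the cone's cross-section at p₁. If d ≥ ρ + (r + γ)/cos θ for some γ > 0, then dist(x, y) > γ for all x ∈ C and y ∈ O with x, y in the plane through q perpendicular to u; in particular C ∩ O = ∅ restricted to that plane. -/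
/-!
A point `x` of the cone with `⟪x - a, u⟫ = t` lies within `t * tan θ` of the axis point
`a + t • u`: by Pythagoras its distance to the axis is `√(‖x - a‖² - t²)`, and the cone condition
bounds `‖x - a‖` by `t / cos θ`. The triangle inequality through `q` and `p₁` then leaves at
least `(r + γ) / cos θ - r > γ` between the cone and the ball.
-/

open Real
open scoped RealInnerProductSpace

section ConeSlice

variable {E : Type*} [NormedAddCommGroup E] [InnerProductSpace ℝ E] {u : E}

theorem inner_sub_add_smul_of_norm_eq_one (hu : ‖u‖ = 1) (x a : E) (s : ℝ) :
    ⟪x - (a + s • u), u⟫ = ⟪x - a, u⟫ - s := by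
  rw [sub_add_eq_sub_sub, inner_sub_left, real_inner_smul_left, real_inner_self_eq_norm_sq, hu]
  ring

theorem norm_sub_inner_smul_sq (hu : ‖u‖ = 1) (v : E) :
    ‖v - ⟪v, u⟫ • u‖ ^ 2 = ‖v‖ ^ 2 - ⟪v, u⟫ ^ 2 := by
  rw [norm_sub_sq_real, real_inner_smul_right, norm_smul, hu, Real.norm_eq_abs, mul_one, sq_abs]
  ring

theorem norm_sub_inner_smul_le_mul_tan {v : E} {θ : ℝ} (hu : ‖u‖ = 1) (hθ₀ : 0 ≤ θ)
    (hθ : θ < π / 2) (hv : ‖v‖ * cos θ ≤ ⟪v, u⟫) :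
    ‖v - ⟪v, u⟫ • u‖ ≤ ⟪v, u⟫ * tan θ := by
  have hcos : 0 < cos θ := cos_pos_of_mem_Ioo ⟨by linarith [pi_pos], hθ⟩
  have hsin : 0 ≤ sin θ := sin_nonneg_of_nonneg_of_le_pi hθ₀ (by linarith [pi_pos])
  have ht : 0 ≤ ⟪v, u⟫ := (mul_nonneg (norm_nonneg v) hcos.le).trans hv
  rw [tan_eq_sin_div_cos, mul_div_assoc', le_div_iff₀ hcos,
    ← pow_le_pow_iff_left₀ (by positivity) (by positivity) two_ne_zero]
  have hv_sq : (‖v‖ * cos θ) ^ 2 ≤ ⟪v, u⟫ ^ 2 :=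
    pow_le_pow_left₀ (by positivity) hv 2
  calc (‖v - ⟪v, u⟫ • u‖ * cos θ) ^ 2 = (‖v‖ * cos θ) ^ 2 - ⟪v, u⟫ ^ 2 * cos θ ^ 2 := by
        rw [mul_pow, norm_sub_inner_smul_sq hu]; ring
    _ ≤ ⟪v, u⟫ ^ 2 * (1 - cos θ ^ 2) := by linarith
    _ = (⟪v, u⟫ * sin θ) ^ 2 := by rw [← sin_sq]; ring

end ConeSlice

theorem stmt_5_general (a u q : EuclideanSpace ℝ (Fin 3)) (hu : ‖u‖ = 1)
    (θ : ℝ) (hθ : θ ∈ Set.Ioo 0 (Real.pi / 2))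
    (r γ : ℝ) (hγ : 0 < γ)
    (C : Set (EuclideanSpace ℝ (Fin 3)))
    (hC : C = {x | ⟪x - a, u⟫ ≥ ‖x - a‖ * Real.cos θ})
    (p₁ : EuclideanSpace ℝ (Fin 3)) (hp₁ : p₁ = a + ⟪q - a, u⟫ • u)
    (hfar : dist q p₁ ≥ ⟪q - a, u⟫ * Real.tan θ + (r + γ) / Real.cos θ) :
    ∀ x ∈ C, ∀ y ∈ Metric.closedBall q r,
      ⟪x - p₁, u⟫ = 0 → ⟪y - p₁, u⟫ = 0 → dist x y > γ := by
  intro x hx y hy hxp _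
  obtain ⟨hθ₀, hθ⟩ := hθ
  have hcos : 0 < cos θ := cos_pos_of_mem_Ioo ⟨by linarith [pi_pos], hθ⟩
  have hcos_lt : cos θ < 1 := by
    simpa using cos_lt_cos_of_nonneg_of_le_pi_div_two le_rfl hθ.le hθ₀
  have hx_height : ⟪x - a, u⟫ = ⟪q - a, u⟫ := by
    rw [hp₁, inner_sub_add_smul_of_norm_eq_one hu] at hxp
    linarith
  have hx_axis : dist x p₁ ≤ ⟪q - a, u⟫ * tan θ := by
    rw [hC] at hx
    rw [dist_eq_norm, hp₁, ← hx_height, sub_add_eq_sub_sub]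
    exact norm_sub_inner_smul_le_mul_tan hu hθ₀.le hθ hx
  have hy_ball : dist y q ≤ r := Metric.mem_closedBall.mp hy
  have hmargin : r + γ < (r + γ) / cos θ := by
    rw [lt_div_iff₀ hcos]
    exact mul_lt_of_lt_one_right (by linarith [dist_nonneg (x := y) (y := q)]) hcos_lt
  linarith [dist_triangle4 q y x p₁, dist_comm q y, dist_comm x y]

/-- safety margin between the cone and the obstacle ball within
the plane through `q` (equivalently through `p₁`) perpendicular to the axis. -/
theorem stmt_5 (a u q : EuclideanSpace ℝ (Fin 3)) (hu : ‖u‖ = 1)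
    (θ : ℝ) (hθ : θ ∈ Set.Ioo 0 (Real.pi / 2))
    (r γ : ℝ) (hr : 0 < r) (hγ : 0 < γ)
    (C : Set (EuclideanSpace ℝ (Fin 3)))
    (hC : C = {x | ⟪x - a, u⟫ ≥ ‖x - a‖ * Real.cos θ})
    (p₁ : EuclideanSpace ℝ (Fin 3)) (hp₁ : p₁ = a + ⟪q - a, u⟫ • u)
    (ht : 0 < ⟪q - a, u⟫)
    (hfar : dist q p₁ ≥ ⟪q - a, u⟫ * Real.tan θ + (r + γ) / Real.cos θ) :
    ∀ x ∈ C, ∀ y ∈ Metric.closedBall q r,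
      ⟪x - p₁, u⟫ = 0 → ⟪y - p₁, u⟫ = 0 → dist x y > γ :=
  stmt_5_general a u q hu θ hθ r γ hγ C hC p₁ hp₁ hfar
end

section
/- For the solid cone C with apex a, unit axis u, half-angle θ ∈ (0, π/2), and any point y with t := ⟪y - a, u⟫ > 0, the distance from y to C is at least (d - t·tan θ)·cos θ, where d is the distance from y to the axis line, whenever d > t·tan θ. -/
open scoped RealInnerProductSpace


private lemma stmt_15_aux (n s r cs sn : ℝ) (hcs : 0 < cs) (hsn : 0 < sn)
    (hpy : sn ^ 2 + cs ^ 2 = 1) (hxC : n * cs ≤ s) (hnn : 0 ≤ n)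
    (hbes : s ^ 2 + r ^ 2 ≤ n ^ 2) : r * cs - s * sn ≤ 0 := by
  have hsnn : 0 ≤ s := le_trans (by positivity) hxC
  have h5 := mul_self_le_mul_self (by positivity : (0:ℝ) ≤ n * cs) hxC
  have hsq : n ^ 2 * cs ^ 2 ≤ s ^ 2 := by nlinarith [h5]
  have h6 := mul_le_mul_of_nonneg_right hbes (sq_nonneg cs)
  have h2 : (r * cs) ^ 2 ≤ (s * sn) ^ 2 := by nlinarith [h6, hsq]
  have h3 : 0 ≤ s * sn := by positivity
  nlinarith [sq_nonneg (r * cs - s * sn), sq_nonneg (r * cs + s * sn)]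

/-- lower bound on the distance from a point to the solid cone. -/
theorem stmt_15 (a u y : EuclideanSpace ℝ (Fin 3)) (hu : ‖u‖ = 1)
    (θ : ℝ) (hθ : θ ∈ Set.Ioo 0 (Real.pi / 2))
    (C : Set (EuclideanSpace ℝ (Fin 3)))
    (hC : C = {x | ⟪x - a, u⟫ ≥ ‖x - a‖ * Real.cos θ})
    (t d : ℝ) (ht : t = ⟪y - a, u⟫) (htpos : 0 < t)
    (hd : d = ‖(y - a) - t • u‖) (hfar : d > t * Real.tan θ) :
    (d - t * Real.tan θ) * Real.cos θ ≤ Metric.infDist y C := by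
  obtain ⟨hθ0, hθ2⟩ := hθ
  have hcos : 0 < Real.cos θ := Real.cos_pos_of_mem_Ioo ⟨by linarith [Real.pi_pos], hθ2⟩
  have hsin : 0 < Real.sin θ := Real.sin_pos_of_pos_of_lt_pi hθ0 (by linarith [Real.pi_pos])
  have htan : Real.tan θ = Real.sin θ / Real.cos θ := Real.tan_eq_sin_div_cos θ
  have htanpos : 0 < Real.tan θ := by rw [htan]; positivity
  have hd0 : 0 < d := lt_trans (by positivity) hfar
  have huu : ⟪u, u⟫ = 1 := by
    rw [real_inner_self_eq_norm_sq, hu]; norm_num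
  obtain ⟨m, hm⟩ : ∃ m : EuclideanSpace ℝ (Fin 3), m = (y - a) - t • u := ⟨_, rfl⟩
  rw [← hm] at hd
  have hmu : ⟪m, u⟫ = 0 := by
    rw [hm, inner_sub_left, real_inner_smul_left, huu, ← ht]; ring
  have hum : ⟪u, m⟫ = 0 := by rw [real_inner_comm]; exact hmu
  have hmm : ⟪m, m⟫ = d ^ 2 := by rw [real_inner_self_eq_norm_sq, ← hd]
  obtain ⟨w, hw⟩ : ∃ w : EuclideanSpace ℝ (Fin 3), w = d⁻¹ • m := ⟨_, rfl⟩
  have hwu : ⟪w, u⟫ = 0 := by rw [hw, real_inner_smul_left, hmu]; ring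
  have huw : ⟪u, w⟫ = 0 := by rw [real_inner_comm]; exact hwu
  have hww : ⟪w, w⟫ = 1 := by
    rw [hw, real_inner_smul_left, real_inner_smul_right, hmm]
    field_simp
  have hyaw : ⟪y - a, w⟫ = d := by
    have h1 : y - a = m + t • u := by rw [hm]; abel
    rw [h1, inner_add_left, hw, real_inner_smul_right, hmm, real_inner_smul_left,
      real_inner_smul_right, hum]
    field_simp
    ring
  obtain ⟨v, hv⟩ : ∃ v : EuclideanSpace ℝ (Fin 3),
      v = Real.cos θ • w - Real.sin θ • u := ⟨_, rfl⟩
  have hvv : ⟪v, v⟫ = 1 := by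
    rw [hv]
    simp only [inner_sub_left, inner_sub_right, real_inner_smul_left, real_inner_smul_right,
      huu, hww, hwu, huw]
    nlinarith [Real.sin_sq_add_cos_sq θ]
  have hvnorm : ‖v‖ = 1 := by
    have h := real_inner_self_eq_norm_sq v
    nlinarith [norm_nonneg v]
  have hyav : ⟪y - a, v⟫ = d * Real.cos θ - t * Real.sin θ := by
    rw [hv, inner_sub_right, real_inner_smul_right, real_inner_smul_right, hyaw, ← ht]; ring
  -- key: for x ∈ C, ⟪x - a, v⟫ ≤ 0
  have key : ∀ x ∈ C, ⟪x - a, v⟫ ≤ 0 := by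
    intro x hx
    rw [hC] at hx
    obtain ⟨p, hp⟩ : ∃ p : EuclideanSpace ℝ (Fin 3), p = x - a := ⟨_, rfl⟩
    obtain ⟨s, hs⟩ : ∃ s : ℝ, s = ⟪p, u⟫ := ⟨_, rfl⟩
    obtain ⟨r, hr⟩ : ∃ r : ℝ, r = ⟪p, w⟫ := ⟨_, rfl⟩
    have hup : ⟪u, p⟫ = s := by rw [real_inner_comm]; exact hs.symm
    have hwp : ⟪w, p⟫ = r := by rw [real_inner_comm]; exact hr.symm
    have hpp : ⟪p, p⟫ = ‖p‖ ^ 2 := real_inner_self_eq_norm_sq p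
    obtain ⟨n, hn⟩ : ∃ n : ℝ, n = ‖p‖ := ⟨_, rfl⟩
    have hxC : s ≥ n * Real.cos θ := by rw [hs, hn, hp]; exact hx
    have hpnn : (0:ℝ) ≤ n := hn ▸ norm_nonneg p
    have hsnn : 0 ≤ s := le_trans (by positivity) hxC
    -- Bessel-type: s^2 + r^2 ≤ n^2
    have hbes : s ^ 2 + r ^ 2 ≤ n ^ 2 := by
      have h0 : (0:ℝ) ≤ ‖p - (s • u + r • w)‖ ^ 2 := by positivity
      have hexp : ‖p - (s • u + r • w)‖ ^ 2 = n ^ 2 - (s ^ 2 + r ^ 2) := by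
        rw [← real_inner_self_eq_norm_sq, hn]
        simp only [inner_sub_left, inner_sub_right, inner_add_left, inner_add_right,
          real_inner_smul_left, real_inner_smul_right, huu, hww, hwu, huw, hup, hwp,
          ← hs, ← hr, hpp]
        ring
      linarith [hexp ▸ h0]
    have hrv : ⟪x - a, v⟫ = r * Real.cos θ - s * Real.sin θ := by
      rw [← hp, hv, inner_sub_right, real_inner_smul_right, real_inner_smul_right,
        ← hs, ← hr]; ring
    rw [hrv]
    exact stmt_15_aux n s r _ _ hcos hsin (Real.sin_sq_add_cos_sq θ) hxC hpnn hbes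
  have hgoal : (d - t * Real.tan θ) * Real.cos θ = d * Real.cos θ - t * Real.sin θ := by
    rw [htan]; field_simp
  have hne : C.Nonempty := ⟨a, by rw [hC]; simp⟩
  by_contra hlt
  push_neg at hlt
  obtain ⟨z, hzC, hzd⟩ := (Metric.infDist_lt_iff hne).mp hlt
  rw [dist_eq_norm, hgoal] at hzd
  have h4 : d * Real.cos θ - t * Real.sin θ ≤ ‖y - z‖ := by
    calc d * Real.cos θ - t * Real.sin θ = ⟪y - a, v⟫ - 0 := by rw [hyav]; ring
    _ ≤ ⟪y - a, v⟫ - ⟪z - a, v⟫ := by linarith [key z hzC]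
    _ = ⟪y - z, v⟫ := by
        rw [← inner_sub_left]; congr 1; abel
    _ ≤ ‖y - z‖ := by
        have := real_inner_le_norm (y - z) v
        rwa [hvnorm, mul_one] at this
  linarith
end
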